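/- Let f be a Boolean function, x a variable, and ℓ a literal on x (either x or ¬x). Let t be a prime implicant of the restriction f|ℓ (the function obtained by fixing x according to ℓ). If t is an implicant of f|¬ℓ, then t is a prime implicant of f; otherwise t ∧ ℓ is a prime implicant of f. -/

import Mathlib

abbrev Term (V : Type*) := V → Option Bool

def Extends {V : Type*} (a : V → Bool) (t : Term V) : Prop :=
  ∀ v b, t v = some b → a v = b

def SubTerm {V : Type*} (s t : Term V) : Prop :=
  ∀ v b, s v = some b → t v = some b

def Implicant {V : Type*} (f : (V → Bool) → Bool) (t : Term V) : Prop :=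
  ∀ a, Extends a t → f a = true

def PrimeImplicant {V : Type*} (f : (V → Bool) → Bool) (t : Term V) : Prop :=
  Implicant f t ∧ ∀ s, SubTerm s t → Implicant f s → s = t

def IP {V : Type*} (f : (V → Bool) → Bool) : Set (Term V) :=
  {t | PrimeImplicant f t}

def Compatible {V : Type*} (t t' : Term V) : Prop :=
  ∀ v b b', t v = some b → t' v = some b' → b = b'

def combine {V : Type*} (t t' : Term V) : Term V :=
  fun v => (t v).orElse (fun _ => t' v)

def maxSet {V : Type*} (S : Set (Term V)) : Set (Term V) :=
  {t ∈ S | ∀ t' ∈ S, SubTerm t' t → t' = t}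

def fAnd {V : Type*} (f g : (V → Bool) → Bool) : (V → Bool) → Bool :=
  fun a => f a && g a

def restrict {V : Type*} [DecidableEq V] (f : (V → Bool) → Bool) (x : V) (b : Bool) :
    (V → Bool) → Bool :=
  fun a => f (Function.update a x b)

def SR {V : Type*} (f : (V → Bool) → Bool) (a : V → Bool) : Set (Term V) :=
  {t | PrimeImplicant f t ∧ Extends a t}

open Function

section Restriction

variable {V : Type*} {f : (V → Bool) → Bool} {s t : Term V} {x : V} {b : Bool}

theorem Extends.of_subTerm {a : V → Bool} (hst : SubTerm s t) (h : Extends a t) : Extends a s :=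
  fun v c hv => h v c (hst v c hv)

theorem Implicant.mono (hst : SubTerm s t) (h : Implicant f s) : Implicant f t :=
  fun a ha => h a (ha.of_subTerm hst)

theorem SubTerm.apply_eq_none (hst : SubTerm s t) (ht : t x = none) : s x = none := by
  cases hs : s x with
  | none => rfl
  | some c => simpa [ht] using hst x c hs

variable [DecidableEq V]

theorem SubTerm.update_none (hst : SubTerm s t) :
    SubTerm (update s x none) (update t x none) := by
  intro v c hv
  rcases eq_or_ne v x with rfl | hvx
  · simp at hv
  · simpa [update_of_ne hvx] using hst v c (by simpa [update_of_ne hvx] using hv)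

theorem subTerm_update_some (hs : ∀ c, s x = some c → c = b) :
    SubTerm s (update s x (some b)) := by
  intro v c hv
  rcases eq_or_ne v x with rfl | hvx
  · simp [hs c hv]
  · simpa [update_of_ne hvx] using hv

theorem implicant_restrict_iff (hs : s x = none) :
    Implicant (restrict f x b) s ↔ Implicant f (update s x (some b)) := by
  constructor
  · intro h a ha
    have hax : a x = b := ha x b (by simp)
    have has : Extends a s := ha.of_subTerm (subTerm_update_some (by simp [hs]))
    simpa [restrict, ← hax] using h a has
  · intro h a ha
    apply h
    intro v c hv
    rcases eq_or_ne v x with rfl | hvx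
    · simpa using hv
    · simpa [update_of_ne hvx] using ha v c (by simpa [update_of_ne hvx] using hv)

theorem Implicant.restrict_update_none (hs : ∀ c, s x = some c → c = b) (h : Implicant f s) :
    Implicant (restrict f x b) (update s x none) := by
  rw [implicant_restrict_iff (update_self x none s), update_idem]
  exact h.mono (subTerm_update_some hs)

theorem Implicant.restrict (hs : s x = none) (h : Implicant f s) :
    Implicant (restrict f x b) s :=
  (implicant_restrict_iff hs).2 (h.mono (subTerm_update_some fun c hc => by simp [hs] at hc))

theorem implicant_of_implicant_restrict (h : Implicant (restrict f x b) s)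
    (h' : Implicant (restrict f x (!b)) s) : Implicant f s := by
  intro a ha
  rw [← update_eq_self x a]
  obtain hb | hb : a x = b ∨ a x = !b := by cases a x <;> cases b <;> simp
  · rw [hb]; exact h a ha
  · rw [hb]; exact h' a ha

theorem PrimeImplicant.of_implicant_restrict_not (ht : PrimeImplicant (restrict f x b) t)
    (htx : t x = none) (hnot : Implicant (restrict f x (!b)) t) : PrimeImplicant f t :=
  ⟨implicant_of_implicant_restrict ht.1 hnot, fun s hst hs =>
    ht.2 s hst (hs.restrict (hst.apply_eq_none htx))⟩

/- For an implicant `s ⊆ t ∧ (x = b)` of `f`, erasing `x` from `s` gives an implicant of `f|_{x=b}`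
below `t`, hence `t` itself; and `s` cannot omit `x`, or `t` would imply `f|_{x=!b}`. -/
theorem PrimeImplicant.update_of_not_implicant_restrict_not
    (ht : PrimeImplicant (restrict f x b) t) (htx : t x = none)
    (hnot : ¬ Implicant (restrict f x (!b)) t) : PrimeImplicant f (update t x (some b)) := by
  refine ⟨(implicant_restrict_iff htx).1 ht.1, fun s hst hs => ?_⟩
  have hsb : ∀ c, s x = some c → c = b := fun c hc => by simpa using (hst x c hc).symm
  have hs_erase : update s x none = t := by
    refine ht.2 _ ?_ (hs.restrict_update_none hsb)
    have := hst.update_none (x := x)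
    rwa [update_idem, (update_eq_self_iff (f := t)).2 htx.symm] at this
  cases hsx : s x with
  | none =>
    rw [update_eq_self_iff.2 hsx.symm] at hs_erase
    exact absurd (hs_erase ▸ hs.restrict hsx) hnot
  | some c =>
    rw [← hs_erase, update_idem, ← hsb c hsx, ← hsx, update_eq_self]

end Restriction

/-- for t ∈ IP(f|ℓ): if t ⊨ f|¬ℓ then t ∈ IP(f), otherwise t ∧ ℓ ∈ IP(f). -/
theorem stmt2 {V : Type*} [DecidableEq V] (f : (V → Bool) → Bool) (x : V) (b : Bool)
    (t : Term V) (ht : t ∈ IP (restrict f x b)) (htx : t x = none) :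
    (Implicant (restrict f x (!b)) t → t ∈ IP f) ∧
    (¬ Implicant (restrict f x (!b)) t → Function.update t x (some b) ∈ IP f) :=
  ⟨ht.of_implicant_restrict_not htx, ht.update_of_not_implicant_restrict_not htx⟩
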